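/- Spectral bound on trailing eigenvalues of the demand-weighted difference matrix: let V be a finite set with |V| = n, let C, D be edge weights on V with Laplacians L_C, L_D, and let R = rank(L_D). Let X ∈ ℝ^{Υ×V} be any real matrix with columns (x_u)_{u∈V}, and let X̂ ∈ ℝ^{Υ×m} (m = n(n−1)/2) be the matrix whose column indexed by the pair {u,v} is √(D_{u,v})·(x_u − x_v). Let σ_1 ≥ ... ≥ σ_m be the eigenvalues of X̂ᵀX̂ in descending order. Then for every integer r ≥ 0 with r + 1 ≤ R, λ_{r+1}(L_C, L_D) · Σ_{j=r+1}^{m} σ_j ≤ Σ_{u<v} C_{u,v}‖x_u − x_v‖². Equivalently, when Σ_{u<v} D_{u,v}‖x_u − x_v‖² = ‖X̂‖_F² > 0 and λ_{r+1}(L_C,L_D) > 0, (Σ_{j≥r+1} σ_j)/‖X̂‖_F² ≤ Φ^SDP / λ_{r+1}(L_C, L_D), where Φ^SDP = (Σ_{u<v} C_{u,v}‖x_u − x_v‖²)/(Σ_{u<v} D_{u,v}‖x_u − x_v‖²). -/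

import Mathlib

open Matrix
open scoped RealInnerProductSpace

/-- The Laplacian matrix of the edge weights `W`. -/
noncomputable def lapM {V : Type*} [Fintype V] [DecidableEq V] (W : V → V → ℝ) :
    Matrix V V ℝ :=
  Matrix.of fun a b =>
    if a = b then ∑ c ∈ Finset.univ.filter (fun c => c ≠ a), W a c else - W a b


abbrev EP (n : ℕ) := {p : Fin n × Fin n // p.1 < p.2}

section SecA
variable {n : ℕ}

lemma sum_pairs (g : Fin n × Fin n → ℝ) (hg : ∀ a, g (a, a) = 0) :
    ∑ p : Fin n × Fin n, g p = ∑ e : EP n, (g e.1 + g e.1.swap) := by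
  classical
  have h1 : ∑ p : Fin n × Fin n, g p
      = ∑ p ∈ Finset.univ.filter (fun p : Fin n × Fin n => p.1 < p.2), g p
        + ∑ p ∈ Finset.univ.filter (fun p : Fin n × Fin n => ¬ p.1 < p.2), g p :=
    (Finset.sum_filter_add_sum_filter_not _ _ _).symm
  have h2 : ∑ p ∈ Finset.univ.filter (fun p : Fin n × Fin n => ¬ p.1 < p.2), g p
      = ∑ p ∈ Finset.univ.filter (fun p : Fin n × Fin n => p.2 < p.1), g p := by
    symm
    apply Finset.sum_subset
    · intro p hp
      simp only [Finset.mem_filter, Finset.mem_univ, true_and] at hp ⊢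
      exact asymm hp
    · intro p hp1 hp2
      simp only [Finset.mem_filter, Finset.mem_univ, true_and] at hp1 hp2
      have : p.1 = p.2 := le_antisymm (not_lt.1 hp2) (not_lt.1 hp1)
      have hp : p = (p.1, p.1) := by
        rw [Prod.ext_iff]; exact ⟨rfl, this.symm⟩
      rw [hp]; exact hg p.1
  have h3 : ∑ p ∈ Finset.univ.filter (fun p : Fin n × Fin n => p.2 < p.1), g p
      = ∑ p ∈ Finset.univ.filter (fun p : Fin n × Fin n => p.1 < p.2), g p.swap := by
    apply Finset.sum_nbij' (fun p => Prod.swap p) (fun p => Prod.swap p) <;>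
      simp [Finset.mem_filter]
  have h4 : ∀ h : Fin n × Fin n → ℝ,
      ∑ p ∈ Finset.univ.filter (fun p : Fin n × Fin n => p.1 < p.2), h p
        = ∑ e : EP n, h e.1 := by
    intro h
    exact Finset.sum_subtype _ (fun p => by simp) h
  rw [h1, h2, h3, ← Finset.sum_add_distrib, h4]

lemma sum_lt_eq_sum_subtype (h : Fin n × Fin n → ℝ) :
    ∑ p ∈ Finset.univ.filter (fun p : Fin n × Fin n => p.1 < p.2), h p
      = ∑ e : EP n, h e.1 :=
  Finset.sum_subtype _ (fun p => by simp) h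

variable {W : Fin n → Fin n → ℝ}

lemma lapM_apply (hdiag : ∀ u, W u u = 0) (a b : Fin n) :
    lapM W a b = (if a = b then ∑ c, W a c else 0) - W a b := by
  simp only [lapM, Matrix.of_apply]
  by_cases h : a = b
  · subst h
    rw [if_pos rfl, if_pos rfl, hdiag, sub_zero]
    rw [Finset.sum_filter]
    apply Finset.sum_congr rfl
    intro c _
    by_cases hc : c = a
    · subst hc; simp [hdiag]
    · rw [if_pos hc]
  · rw [if_neg h, if_neg h, zero_sub]

lemma mulVec_lapM (hdiag : ∀ u, W u u = 0) (w : Fin n → ℝ) (a : Fin n) :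
    ((lapM W) *ᵥ w) a = ∑ b, W a b * (w a - w b) := by
  simp only [Matrix.mulVec, dotProduct]
  have : ∀ b, lapM W a b * w b
      = (if a = b then (∑ c, W a c) * w b else 0) - W a b * w b := by
    intro b
    rw [lapM_apply hdiag, sub_mul]
    by_cases h : a = b
    · rw [if_pos h, if_pos h]
    · rw [if_neg h, if_neg h, zero_mul]
  rw [Finset.sum_congr rfl (fun b _ => this b), Finset.sum_sub_distrib]
  rw [Finset.sum_ite_eq Finset.univ a (fun b => (∑ c, W a c) * w b)]
  rw [if_pos (Finset.mem_univ a), Finset.sum_mul]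
  rw [← Finset.sum_sub_distrib]
  apply Finset.sum_congr rfl
  intro b _
  ring

lemma qf_eq_sum (hsymm : ∀ u v, W u v = W v u) (hdiag : ∀ u, W u u = 0)
    (v w : Fin n → ℝ) :
    v ⬝ᵥ (lapM W) *ᵥ w
      = ∑ e : EP n, W e.1.1 e.1.2 * ((v e.1.1 - v e.1.2) * (w e.1.1 - w e.1.2)) := by
  have step1 : v ⬝ᵥ (lapM W) *ᵥ w
      = ∑ p : Fin n × Fin n, W p.1 p.2 * (v p.1 * (w p.1 - w p.2)) := by
    simp only [dotProduct]
    rw [Fintype.sum_prod_type]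
    apply Finset.sum_congr rfl
    intro a _
    rw [mulVec_lapM hdiag, Finset.mul_sum]
    apply Finset.sum_congr rfl
    intro b _
    ring
  rw [step1, sum_pairs _ (fun a => by rw [hdiag]; ring)]
  apply Finset.sum_congr rfl
  intro e _
  simp only [Prod.fst_swap, Prod.snd_swap]
  rw [hsymm e.1.2 e.1.1]
  ring

lemma qf_comm (hsymm : ∀ u v, W u v = W v u) (hdiag : ∀ u, W u u = 0)
    (v w : Fin n → ℝ) : v ⬝ᵥ (lapM W) *ᵥ w = w ⬝ᵥ (lapM W) *ᵥ v := by
  rw [qf_eq_sum hsymm hdiag, qf_eq_sum hsymm hdiag]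
  apply Finset.sum_congr rfl; intro e _; ring

lemma qf_nonneg (hsymm : ∀ u v, W u v = W v u) (hdiag : ∀ u, W u u = 0)
    (hnn : ∀ u v, 0 ≤ W u v) (v : Fin n → ℝ) : 0 ≤ v ⬝ᵥ (lapM W) *ᵥ v := by
  rw [qf_eq_sum hsymm hdiag]
  apply Finset.sum_nonneg
  intro e _
  exact mul_nonneg (hnn _ _) (mul_self_nonneg _)

lemma mulVec_eq_zero_of_qf_eq_zero (hsymm : ∀ u v, W u v = W v u) (hdiag : ∀ u, W u u = 0)
    (hnn : ∀ u v, 0 ≤ W u v) {v : Fin n → ℝ} (h : v ⬝ᵥ (lapM W) *ᵥ v = 0) :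
    (lapM W) *ᵥ v = 0 := by
  have hterm : ∀ e : EP n, W e.1.1 e.1.2 * (v e.1.1 - v e.1.2) = 0 := by
    rw [qf_eq_sum hsymm hdiag] at h
    intro e
    have := (Finset.sum_eq_zero_iff_of_nonneg (fun e _ =>
      mul_nonneg (hnn e.1.1 e.1.2) (mul_self_nonneg _))).1 h e (Finset.mem_univ e)
    rcases mul_eq_zero.1 this with h1 | h2
    · rw [h1, zero_mul]
    · rw [mul_self_eq_zero.1 h2, mul_zero]
  have hdot : ∀ u : Fin n → ℝ, u ⬝ᵥ (lapM W) *ᵥ v = 0 := by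
    intro u
    rw [qf_eq_sum hsymm hdiag]
    apply Finset.sum_eq_zero
    intro e _
    calc W e.1.1 e.1.2 * ((u e.1.1 - u e.1.2) * (v e.1.1 - v e.1.2))
        = (u e.1.1 - u e.1.2) * (W e.1.1 e.1.2 * (v e.1.1 - v e.1.2)) := by ring
      _ = 0 := by rw [hterm e, mul_zero]
  exact dotProduct_self_eq_zero.1 (hdot ((lapM W) *ᵥ v))

lemma lapM_isHermitian (hsymm : ∀ u v, W u v = W v u) : (lapM W).IsHermitian := by
  ext a b
  simp only [Matrix.conjTranspose_apply, lapM, Matrix.of_apply, star_trivial]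
  by_cases h : a = b
  · subst h; simp
  · rw [if_neg h, if_neg (Ne.symm h), hsymm]

end SecA

section SecB0
variable {n : ℕ}

local notation "Euc" => EuclideanSpace ℝ (Fin n)

end SecB0

lemma ip_eq_dot {ι : Type*} [Fintype ι] (a b : EuclideanSpace ℝ ι) : ⟪a, b⟫ = a ⬝ᵥ b := by
  rw [EuclideanSpace.inner_eq_star_dotProduct]
  simp [dotProduct, mul_comm]

section SecB
variable {n : ℕ}

local notation "Euc" => EuclideanSpace ℝ (Fin n)

lemma toEuc_apply (M : Matrix (Fin n) (Fin n) ℝ) (u : Euc) :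
    Matrix.toEuclideanLin M u = M *ᵥ u := rfl

variable (Cw Dw : Fin n → Fin n → ℝ)

/-- kernel of L_D -/
noncomputable def Ksub : Submodule ℝ Euc := LinearMap.ker (Matrix.toEuclideanLin (lapM Dw))

/-- (L_C K)ᗮ -/
noncomputable def Vsub : Submodule ℝ Euc :=
  (Submodule.map (Matrix.toEuclideanLin (lapM Cw)) (Ksub Dw))ᗮ

noncomputable def Nsub : Submodule ℝ Euc := Vsub Cw Dw ⊓ Ksub Dw

noncomputable def Usub : Submodule ℝ Euc := Vsub Cw Dw ⊓ (Nsub Cw Dw)ᗮ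

variable {Cw Dw}

lemma mem_Ksub {x : Euc} : x ∈ Ksub (n := n) Dw ↔ lapM Dw *ᵥ x = 0 := by
  rw [Ksub, LinearMap.mem_ker, Matrix.toEuclideanLin_apply, WithLp.toLp_eq_zero]

variable (hCsymm : ∀ u v, Cw u v = Cw v u) (hCnonneg : ∀ u v, 0 ≤ Cw u v)
    (hCdiag : ∀ u, Cw u u = 0)

section
include hCsymm

lemma TC_symm : ∀ x y : Euc,
    ⟪Matrix.toEuclideanLin (lapM Cw) x, y⟫ = ⟪x, Matrix.toEuclideanLin (lapM Cw) y⟫ :=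
  (Matrix.isHermitian_iff_isSymmetric.1 (lapM_isHermitian hCsymm))

include hCdiag hCnonneg

lemma decomp_V : ∀ y : Euc, ∃ u nn, u ∈ Vsub Cw Dw ∧ nn ∈ Ksub Dw ∧ y = u + nn := by
  intro y
  classical
  set K := Ksub (n := n) Dw with hK
  set TC := Matrix.toEuclideanLin (lapM Cw) with hTC
  set PK : Euc →ₗ[ℝ] Euc := K.subtype.comp K.orthogonalProjectionOnto.toLinearMap with hPK
  have hPKapp : ∀ x : Euc, PK x = ↑(K.orthogonalProjectionOnto x) := fun _ => rfl
  have hPKsym : ∀ x y : Euc, ⟪PK x, y⟫ = ⟪x, PK y⟫ := by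
    intro x y
    rw [hPKapp, hPKapp]
    exact Submodule.inner_starProjection_left_eq_right K x y
  set S : Euc →ₗ[ℝ] Euc := PK ∘ₗ TC ∘ₗ PK with hS
  have hSapp : ∀ x, S x = PK (TC (PK x)) := fun _ => rfl
  have hSsym : ∀ x y : Euc, ⟪S x, y⟫ = ⟪x, S y⟫ := by
    intro x y
    rw [hSapp, hSapp, hPKsym, TC_symm hCsymm, hPKsym]
  -- range S = (ker S)ᗮ
  have hle : LinearMap.range S ≤ (LinearMap.ker S)ᗮ := by
    rintro _ ⟨x, rfl⟩
    intro z hz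
    rw [LinearMap.mem_ker] at hz
    rw [real_inner_comm, hSsym, hz, inner_zero_right]
  have hfr : Module.finrank ℝ (LinearMap.range S) = Module.finrank ℝ (LinearMap.ker S)ᗮ := by
    have h1 := LinearMap.finrank_range_add_finrank_ker S
    have h2 := Submodule.finrank_add_finrank_orthogonal (LinearMap.ker S)
    omega
  have hrange : LinearMap.range S = (LinearMap.ker S)ᗮ :=
    Submodule.eq_of_le_of_finrank_eq hle hfr
  -- the vector g
  set g : Euc := PK (TC y) with hg
  have hgmem : g ∈ (LinearMap.ker S)ᗮ := by
    intro z hz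
    rw [LinearMap.mem_ker] at hz
    have hq : (PK z) ⬝ᵥ lapM Cw *ᵥ (PK z) = 0 := by
      have : ⟪PK z, TC (PK z)⟫ = ⟪z, S z⟫ := by
        rw [hSapp, ← hPKsym]
      rw [← ip_eq_dot, ← toEuc_apply, ← hTC, this, hz, inner_zero_right]
    have hTCPKz : TC (PK z) = 0 := by
      rw [hTC, Matrix.toEuclideanLin_apply, WithLp.toLp_eq_zero]
      exact mulVec_eq_zero_of_qf_eq_zero hCsymm hCdiag hCnonneg hq
    rw [real_inner_comm, hg, hPKsym, TC_symm hCsymm, hTCPKz, inner_zero_right]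
  obtain ⟨x, hx⟩ : g ∈ LinearMap.range S := by rw [hrange]; exact hgmem
  refine ⟨y - PK x, PK x, ?_, ?_, by abel⟩
  · -- y - PK x ∈ Vsub
    intro w hw
    obtain ⟨k, hk, rfl⟩ := hw
    have hk' : k ∈ K := hk
    have hPKk : PK k = k := by
      rw [hPKapp]
      exact Submodule.starProjection_eq_self_iff.2 hk'
    have e1 : ⟪TC k, y⟫ = ⟪k, g⟫ := by
      calc ⟪TC k, y⟫ = ⟪k, TC y⟫ := TC_symm hCsymm k y
        _ = ⟪PK k, TC y⟫ := by rw [hPKk]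
        _ = ⟪k, PK (TC y)⟫ := hPKsym k (TC y)
        _ = ⟪k, g⟫ := by rw [hg]
    have e2 : ⟪TC k, PK x⟫ = ⟪k, g⟫ := by
      calc ⟪TC k, PK x⟫ = ⟪k, TC (PK x)⟫ := TC_symm hCsymm k (PK x)
        _ = ⟪PK k, TC (PK x)⟫ := by rw [hPKk]
        _ = ⟪k, PK (TC (PK x))⟫ := hPKsym k _
        _ = ⟪k, g⟫ := by rw [← hSapp, hx]
    rw [inner_sub_right, e1, e2, sub_self]
  · rw [hPKapp]; exact SetLike.coe_mem _

lemma decomp_U : ∀ y : Euc, ∃ u nn, u ∈ Usub Cw Dw ∧ nn ∈ Ksub Dw ∧ y = u + nn := by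
  intro y
  obtain ⟨u₀, nn, hu₀, hnn, rfl⟩ := decomp_V hCsymm hCnonneg hCdiag y
  classical
  set N := Nsub Cw Dw with hN
  set n₁ : Euc := ↑(N.orthogonalProjectionOnto u₀) with hn₁
  have hn₁N : n₁ ∈ N := SetLike.coe_mem _
  refine ⟨u₀ - n₁, n₁ + nn, ⟨?_, ?_⟩, ?_, by abel⟩
  · exact Submodule.sub_mem _ hu₀ (Submodule.mem_inf.1 hn₁N).1
  · exact Submodule.sub_starProjection_mem_orthogonal u₀
  · exact Submodule.add_mem _ (Submodule.mem_inf.1 hn₁N).2 hnn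

end

lemma Usub_qC_orth (hu : u ∈ Usub Cw Dw) (hk : lapM Dw *ᵥ k = 0) :
    (u : Fin n → ℝ) ⬝ᵥ lapM Cw *ᵥ k = 0 := by
  have := (Submodule.mem_inf.1 hu).1
  have h2 := this (Matrix.toEuclideanLin (lapM Cw) (WithLp.toLp 2 k))
    ⟨WithLp.toLp 2 k, mem_Ksub.2 hk, rfl⟩
  rw [ip_eq_dot, toEuc_apply] at h2
  rw [dotProduct_comm]
  exact h2

lemma Usub_inj (hu : u ∈ Usub Cw Dw) (hk : lapM Dw *ᵥ u = 0) : u = 0 := by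
  have h1 := (Submodule.mem_inf.1 hu).1
  have h2 := (Submodule.mem_inf.1 hu).2
  have huN : u ∈ Nsub Cw Dw := Submodule.mem_inf.2 ⟨h1, mem_Ksub.2 hk⟩
  have := h2 u huN
  exact inner_self_eq_zero.1 this

lemma rank_le_finrank_Usub (hCsymm : ∀ u v, Cw u v = Cw v u) (hCnonneg : ∀ u v, 0 ≤ Cw u v)
    (hCdiag : ∀ u, Cw u u = 0) :
    (lapM Dw).rank ≤ Module.finrank ℝ (Usub Cw Dw) := by
  classical
  set U := Usub Cw Dw with hU
  set φ : U →ₗ[ℝ] (Fin n → ℝ) :=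
    (lapM Dw).mulVecLin ∘ₗ (WithLp.linearEquiv 2 ℝ (Fin n → ℝ)).toLinearMap ∘ₗ U.subtype
    with hφ
  have hφapp : ∀ u : U, φ u = lapM Dw *ᵥ (u : Fin n → ℝ) := fun _ => rfl
  have hker : LinearMap.ker φ = ⊥ := by
    rw [LinearMap.ker_eq_bot']
    intro u hu0
    rw [hφapp] at hu0
    have := Usub_inj (u := (u : Euc)) u.2 hu0
    exact Subtype.ext this
  have hrange : LinearMap.range ((lapM Dw).mulVecLin) ≤ LinearMap.range φ := by
    rintro _ ⟨y, rfl⟩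
    obtain ⟨u, nn, hu, hnn, hy⟩ := decomp_U hCsymm hCnonneg hCdiag (WithLp.toLp 2 y)
    refine ⟨⟨u, hu⟩, ?_⟩
    rw [hφapp]
    have : (lapM Dw).mulVecLin y = lapM Dw *ᵥ y := rfl
    rw [this, show y = u.ofLp + nn.ofLp from congrArg WithLp.ofLp hy, Matrix.mulVec_add,
      mem_Ksub.1 hnn, add_zero]
  have h1 : (lapM Dw).rank ≤ Module.finrank ℝ (LinearMap.range φ) := by
    rw [Matrix.rank]
    exact Submodule.finrank_mono hrange
  have h2 := LinearMap.finrank_range_add_finrank_ker φ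
  rw [hker, finrank_bot] at h2
  omega

end SecB

section Helpers
variable {V : Type*} [Fintype V] [DecidableEq V] {ι : Type*} [Fintype ι]

lemma dot_sum_left (f : ι → V → ℝ) (w : V → ℝ) :
    (∑ k, f k) ⬝ᵥ w = ∑ k, f k ⬝ᵥ w := by
  simp only [dotProduct, Finset.sum_apply, Finset.sum_mul]
  rw [Finset.sum_comm]

lemma dot_sum_right (w : V → ℝ) (f : ι → V → ℝ) :
    w ⬝ᵥ (∑ k, f k) = ∑ k, w ⬝ᵥ f k := by
  simp only [dotProduct, Finset.sum_apply, Finset.mul_sum]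
  rw [Finset.sum_comm]

lemma mulVec_sum (M : Matrix V V ℝ) (f : ι → V → ℝ) :
    M *ᵥ (∑ k, f k) = ∑ k, M *ᵥ f k := by
  have := map_sum M.mulVecLin f Finset.univ
  simpa only [Matrix.mulVecLin_apply] using this

lemma qf_sum_left (M : Matrix V V ℝ) (c : ι → ℝ) (vv : ι → V → ℝ)
    (w : V → ℝ) :
    (∑ k, c k • vv k) ⬝ᵥ M *ᵥ w = ∑ k, c k * (vv k ⬝ᵥ M *ᵥ w) := by
  rw [dot_sum_left]
  exact Finset.sum_congr rfl fun k _ => smul_dotProduct (c k) (vv k) _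

lemma qf_sum_right (M : Matrix V V ℝ) (w : V → ℝ) (c : ι → ℝ)
    (vv : ι → V → ℝ) :
    w ⬝ᵥ M *ᵥ (∑ k, c k • vv k) = ∑ k, c k * (w ⬝ᵥ M *ᵥ vv k) := by
  rw [show (∑ k, c k • vv k) = ∑ k, (c k • vv k) from rfl, _root_.mulVec_sum, dot_sum_right]
  apply Finset.sum_congr rfl
  intro k _
  rw [Matrix.mulVec_smul, dotProduct_smul]
  rfl

lemma dot_mulVec_symm {A : Matrix V V ℝ} (hA : Aᵀ = A) (w z : V → ℝ) :
    w ⬝ᵥ A *ᵥ z = (A *ᵥ w) ⬝ᵥ z := by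
  rw [dotProduct_mulVec]
  conv_lhs => rw [← hA]
  rw [Matrix.vecMul_transpose]

lemma bilin_sum [DecidableEq ι] (M : Matrix V V ℝ) (vv : ι → V → ℝ) (t : ι → ℝ)
    (h : ∀ k l, vv k ⬝ᵥ M *ᵥ vv l = if k = l then t k else 0) (c d : ι → ℝ) :
    (∑ k, c k • vv k) ⬝ᵥ M *ᵥ (∑ k, d k • vv k) = ∑ k, t k * (c k * d k) := by
  rw [qf_sum_left]
  apply Finset.sum_congr rfl
  intro k _
  rw [qf_sum_right, Finset.sum_eq_single k]
  · rw [h k k, if_pos rfl]; ring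
  · intro l _ hl
    rw [h k l, if_neg (Ne.symm hl), mul_zero]
  · intro hk; exact absurd (Finset.mem_univ k) hk

end Helpers

section SecC
variable {n : ℕ} {Cw Dw : Fin n → Fin n → ℝ}

variable (hCsymm : ∀ u v, Cw u v = Cw v u) (hCnonneg : ∀ u v, 0 ≤ Cw u v)
    (hCdiag : ∀ u, Cw u u = 0)
    (hDsymm : ∀ u v, Dw u v = Dw v u) (hDnonneg : ∀ u v, 0 ≤ Dw u v)
    (hDdiag : ∀ u, Dw u u = 0)

/-- A structure packaging the simultaneous diagonalization data. -/
structure PencilData (Cw Dw : Fin n → Fin n → ℝ) where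
  s : ℕ
  v : Fin s → (Fin n → ℝ)
  lam : Fin s → ℝ
  hs : (lapM Dw).rank ≤ s
  hD : ∀ k l, v k ⬝ᵥ lapM Dw *ᵥ v l = if k = l then 1 else 0
  hC : ∀ k l, v k ⬝ᵥ lapM Cw *ᵥ v l = if k = l then lam k else 0
  hmono : Monotone lam
  hcomp : ∀ y : Fin n → ℝ, ∃ nv : Fin n → ℝ,
    lapM Dw *ᵥ nv = 0 ∧ (∀ k, v k ⬝ᵥ lapM Cw *ᵥ nv = 0) ∧
    y = (∑ k, (y ⬝ᵥ lapM Dw *ᵥ v k) • v k) + nv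

open scoped MatrixOrder Matrix.Norms.L2Operator in
lemma exists_sqrt_herm {s : ℕ} (A : Matrix (Fin s) (Fin s) ℝ) (hA : A.PosSemidef) :
    ∃ B : Matrix (Fin s) (Fin s) ℝ, B * B = A ∧ Bᴴ = B :=
  ⟨CFC.sqrt A, CFC.sqrt_mul_sqrt_self A hA.nonneg, (CFC.sqrt_nonneg A).posSemidef.1⟩

include hCsymm hCnonneg hCdiag hDsymm hDnonneg hDdiag in
lemma pencil_exists : Nonempty (PencilData Cw Dw) := by
  classical
  set U := Usub Cw Dw with hU
  set s := Module.finrank ℝ U with hsdef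
  set b := Module.finBasis ℝ U with hb
  set Q : Matrix (Fin n) (Fin s) ℝ := Matrix.of (fun i k => (b k : EuclideanSpace ℝ (Fin n)) i)
    with hQ
  have hQa : ∀ a : Fin s → ℝ, Q *ᵥ a = ((∑ k, a k • b k : U) : EuclideanSpace ℝ (Fin n)) := by
    intro a
    funext i
    simp only [Matrix.mulVec, dotProduct, hQ, Matrix.of_apply]
    rw [show ((((∑ k, a k • b k : U)) : EuclideanSpace ℝ (Fin n)) i)
      = ∑ k, a k * ((b k : EuclideanSpace ℝ (Fin n)) i) from ?_]
    · exact Finset.sum_congr rfl fun k _ => mul_comm _ _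
    · rw [Submodule.coe_sum]
      rw [show ((∑ k, ((a k • b k : U) : EuclideanSpace ℝ (Fin n))) i)
          = ∑ k, ((a k • b k : U) : EuclideanSpace ℝ (Fin n)) i from ?_]
      · apply Finset.sum_congr rfl
        intro k _
        rfl
      · rw [WithLp.ofLp_sum]; exact Finset.sum_apply i Finset.univ _
  have hQmem : ∀ a : Fin s → ℝ, (WithLp.toLp 2 (Q *ᵥ a) : EuclideanSpace ℝ (Fin n)) ∈ U := by
    intro a
    rw [hQa]
    exact SetLike.coe_mem _
  have hQinj : ∀ a : Fin s → ℝ, Q *ᵥ a = 0 → a = 0 := by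
    intro a ha
    rw [hQa] at ha
    have : (∑ k, a k • b k : U) = 0 := by
      exact Subtype.ext ((WithLp.ofLp_eq_zero 2).1 ha)
    have h2 := linearIndependent_iff'.1 b.linearIndependent Finset.univ a this
    funext k
    exact h2 k (Finset.mem_univ k)
  have hQsurj : ∀ u : U, ∃ a : Fin s → ℝ, Q *ᵥ a = (u : EuclideanSpace ℝ (Fin n)) := by
    intro u
    refine ⟨fun k => b.repr u k, ?_⟩
    rw [hQa]
    congr 1
    exact congrArg Subtype.val (b.sum_repr u)
  have hsrank : (lapM Dw).rank ≤ s := rank_le_finrank_Usub hCsymm hCnonneg hCdiag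
  set Dmm : Matrix (Fin s) (Fin s) ℝ := Qᴴ * lapM Dw * Q with hDmmdef
  set Cmm : Matrix (Fin s) (Fin s) ℝ := Qᴴ * lapM Cw * Q with hCmmdef
  have hQH : Qᴴ = Qᵀ := by
    ext i j
    simp [Matrix.conjTranspose_apply]
  have hform : ∀ (M : Matrix (Fin n) (Fin n) ℝ) (a c : Fin s → ℝ),
      a ⬝ᵥ (Qᴴ * M * Q) *ᵥ c = (Q *ᵥ a) ⬝ᵥ M *ᵥ (Q *ᵥ c) := by
    intro M a c
    rw [← Matrix.mulVec_mulVec, ← Matrix.mulVec_mulVec,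
      dotProduct_mulVec a Qᴴ _, hQH, Matrix.vecMul_transpose]
  have hDmmPD : Dmm.PosDef := by
    refine Matrix.PosDef.of_dotProduct_mulVec_pos
      (isHermitian_conjTranspose_mul_mul Q (lapM_isHermitian hDsymm)) ?_
    intro x hx
    have hst : star x = x := by
      funext i; simp
    rw [hst, hDmmdef, hform]
    have h0 : 0 ≤ (Q *ᵥ x) ⬝ᵥ lapM Dw *ᵥ (Q *ᵥ x) := qf_nonneg hDsymm hDdiag hDnonneg _
    have hne : (Q *ᵥ x) ⬝ᵥ lapM Dw *ᵥ (Q *ᵥ x) ≠ 0 := by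
      intro h0'
      have := mulVec_eq_zero_of_qf_eq_zero hDsymm hDdiag hDnonneg h0'
      have hQx0 : (WithLp.toLp 2 (Q *ᵥ x) : EuclideanSpace ℝ (Fin n)) = 0 :=
        Usub_inj (hQmem x) this
      exact hx (hQinj x ((WithLp.toLp_eq_zero 2).1 hQx0))
    have : (0:ℝ) < (Q *ᵥ x) ⬝ᵥ lapM Dw *ᵥ (Q *ᵥ x) := lt_of_le_of_ne h0 (Ne.symm hne)
    simpa using this
  have hDH : Dmm.PosSemidef := hDmmPD.posSemidef
  obtain ⟨Dh, hDhsq, hDhH⟩ := exists_sqrt_herm Dmm hDH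
  have hDhT : Dhᵀ = Dh := by
    calc Dhᵀ = Dhᴴ := by ext i j; simp [Matrix.conjTranspose_apply]
      _ = Dh := hDhH
  have hdet : IsUnit Dh.det := by
    refine isUnit_iff_ne_zero.2 ?_
    intro h0
    have hd : Dh.det * Dh.det = Dmm.det := by rw [← Matrix.det_mul, hDhsq]
    rw [h0, mul_zero] at hd
    exact absurd hd.symm (ne_of_gt hDmmPD.det_pos)
  set Dhi : Matrix (Fin s) (Fin s) ℝ := Dh⁻¹ with hDhidef
  have hDhDhi : Dh * Dhi = 1 := Matrix.mul_nonsing_inv _ hdet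
  have hDhiDh : Dhi * Dh = 1 := Matrix.nonsing_inv_mul _ hdet
  have hDhiT : Dhiᵀ = Dhi := by
    rw [hDhidef, Matrix.transpose_nonsing_inv, hDhT]
  have hDhiH : Dhiᴴ = Dhi := by
    rw [show Dhiᴴ = Dhiᵀ from by ext i j; simp [Matrix.conjTranspose_apply], hDhiT]
  set Mm : Matrix (Fin s) (Fin s) ℝ := Dhi * Cmm * Dhi with hMmdef
  have hMmH : Mm.IsHermitian := by
    have := isHermitian_conjTranspose_mul_mul Dhi
      (isHermitian_conjTranspose_mul_mul Q (lapM_isHermitian hCsymm) : Cmm.IsHermitian)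
    rwa [hDhiH] at this
  set B := hMmH.eigenvectorBasis with hB
  set eig := hMmH.eigenvalues with heigdef
  have heig : ∀ j, Mm *ᵥ ⇑(B j) = eig j • ⇑(B j) := fun j =>
    hMmH.mulVec_eigenvectorBasis j
  set p := Tuple.sort eig with hp
  set lam : Fin s → ℝ := eig ∘ p with hlam
  set v : Fin s → (Fin n → ℝ) := fun k => Q *ᵥ (Dhi *ᵥ ⇑(B (p k))) with hv
  have hBdot : ∀ j j' : Fin s, (⇑(B j) : Fin s → ℝ) ⬝ᵥ ⇑(B j') = if j = j' then 1 else 0 := by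
    intro j j'
    rw [← ip_eq_dot]
    exact orthonormal_iff_ite.1 B.orthonormal j j'
  have hDmmDhi : Dmm * Dhi = Dh := by
    rw [← hDhsq, Matrix.mul_assoc, hDhDhi, Matrix.mul_one]
  have hCmmDhi : Cmm * Dhi = Dh * Mm := by
    rw [hMmdef, ← Matrix.mul_assoc, ← Matrix.mul_assoc, hDhDhi, Matrix.one_mul]
  have hunit : ∀ x : Fin s → ℝ, Dh *ᵥ (Dhi *ᵥ x) = x := by
    intro x
    rw [Matrix.mulVec_mulVec, hDhDhi, Matrix.one_mulVec]
  have hP1 : ∀ k l, v k ⬝ᵥ lapM Dw *ᵥ v l = if k = l then 1 else 0 := by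
    intro k l
    rw [hv]
    show (Q *ᵥ (Dhi *ᵥ ⇑(B (p k)))) ⬝ᵥ lapM Dw *ᵥ (Q *ᵥ (Dhi *ᵥ ⇑(B (p l)))) = _
    rw [← hform, ← hDmmdef, Matrix.mulVec_mulVec, hDmmDhi,
      dot_mulVec_symm hDhT, hunit, hBdot]
    simp only [EmbeddingLike.apply_eq_iff_eq]
  have hP2 : ∀ k l, v k ⬝ᵥ lapM Cw *ᵥ v l = if k = l then lam k else 0 := by
    intro k l
    rw [hv]
    show (Q *ᵥ (Dhi *ᵥ ⇑(B (p k)))) ⬝ᵥ lapM Cw *ᵥ (Q *ᵥ (Dhi *ᵥ ⇑(B (p l)))) = _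
    rw [← hform, ← hCmmdef, Matrix.mulVec_mulVec, hCmmDhi, ← Matrix.mulVec_mulVec,
      heig, Matrix.mulVec_smul, dotProduct_smul,
      dot_mulVec_symm hDhT, hunit, hBdot]
    by_cases hkl : k = l
    · subst hkl
      simp [hlam]
    · rw [if_neg (fun h => hkl (p.injective h)), if_neg hkl, smul_zero]
  have hcomp : ∀ y : Fin n → ℝ, ∃ nv : Fin n → ℝ,
      lapM Dw *ᵥ nv = 0 ∧ (∀ k, v k ⬝ᵥ lapM Cw *ᵥ nv = 0) ∧
      y = (∑ k, (y ⬝ᵥ lapM Dw *ᵥ v k) • v k) + nv := by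
    intro y
    obtain ⟨u, nn, hu, hnn, hy⟩ := decomp_U hCsymm hCnonneg hCdiag (WithLp.toLp 2 y)
    obtain ⟨a, ha⟩ := hQsurj ⟨u, hu⟩
    have hnnD : lapM Dw *ᵥ nn = 0 := mem_Ksub.1 hnn
    have ha' : Q *ᵥ a = (u : Fin n → ℝ) := ha
    refine ⟨nn, hnnD, ?_, ?_⟩
    · intro k
      exact Usub_qC_orth (hQmem _) hnnD
    · have hck : ∀ k, y ⬝ᵥ lapM Dw *ᵥ v k = (Dh *ᵥ a) ⬝ᵥ ⇑(B (p k)) := by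
        intro k
        have hysplit : y = (u : Fin n → ℝ) + nn := congrArg WithLp.ofLp hy
        rw [hysplit, add_dotProduct]
        have hnnpart : nn ⬝ᵥ lapM Dw *ᵥ v k = 0 := by
          rw [qf_comm hDsymm hDdiag, hnnD, dotProduct_zero]
        have hupart : (u : Fin n → ℝ) ⬝ᵥ lapM Dw *ᵥ v k = (Dh *ᵥ a) ⬝ᵥ ⇑(B (p k)) := by
          rw [← ha']
          show (Q *ᵥ a) ⬝ᵥ lapM Dw *ᵥ (Q *ᵥ (Dhi *ᵥ ⇑(B (p k)))) = _
          rw [← hform, ← hDmmdef, Matrix.mulVec_mulVec, hDmmDhi,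
            dot_mulVec_symm hDhT]
        rw [hnnpart, hupart, add_zero]
      set dha : EuclideanSpace ℝ (Fin s) := WithLp.toLp 2 (Dh *ᵥ a) with hdha
      have hpars : (∑ j, ((Dh *ᵥ a) ⬝ᵥ ⇑(B j)) • ⇑(B j)) = (Dh *ᵥ a : Fin s → ℝ) := by
        have h0 := B.sum_repr' dha
        calc (∑ j, ((Dh *ᵥ a) ⬝ᵥ ⇑(B j)) • ⇑(B j))
            = ∑ j, (⟪B j, dha⟫) • ⇑(B j) := by
              apply Finset.sum_congr rfl
              intro j _
              congr 1
          _ = (Dh *ᵥ a : Fin s → ℝ) := by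
              have h1 := congrArg WithLp.ofLp h0
              simp only [WithLp.ofLp_sum, WithLp.ofLp_smul] at h1
              exact h1
      have hsum : ∑ k, (y ⬝ᵥ lapM Dw *ᵥ v k) • v k = (u : Fin n → ℝ) := by
        calc ∑ k, (y ⬝ᵥ lapM Dw *ᵥ v k) • v k
            = ∑ k, Q *ᵥ (Dhi *ᵥ (((Dh *ᵥ a) ⬝ᵥ ⇑(B (p k))) • ⇑(B (p k)))) := by
              apply Finset.sum_congr rfl
              intro k _
              rw [hck k, Matrix.mulVec_smul, Matrix.mulVec_smul]
          _ = Q *ᵥ (Dhi *ᵥ (∑ k, ((Dh *ᵥ a) ⬝ᵥ ⇑(B (p k))) • ⇑(B (p k)))) := by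
              have hlin := map_sum (Q.mulVecLin.comp Dhi.mulVecLin)
                (fun k => ((Dh *ᵥ a) ⬝ᵥ ⇑(B (p k))) • ⇑(B (p k))) Finset.univ
              simp only [LinearMap.coe_comp, Function.comp_apply, Matrix.mulVecLin_apply] at hlin
              exact hlin.symm
          _ = Q *ᵥ (Dhi *ᵥ (Dh *ᵥ a)) := by
              rw [show (∑ k, ((Dh *ᵥ a) ⬝ᵥ ⇑(B (p k))) • ⇑(B (p k))) = (Dh *ᵥ a : Fin s → ℝ)
                from (Equiv.sum_comp p (fun j => ((Dh *ᵥ a) ⬝ᵥ ⇑(B j)) • ⇑(B j))).trans hpars]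
          _ = Q *ᵥ a := by rw [Matrix.mulVec_mulVec a Dhi Dh, hDhiDh, Matrix.one_mulVec]
          _ = (u : Fin n → ℝ) := ha'
      rw [hsum]
      exact congrArg WithLp.ofLp hy
  exact ⟨⟨s, v, lam, hsrank, hP1, hP2, Tuple.monotone_sort eig, hcomp⟩⟩

end SecC

/-- The `i`-th smallest generalized eigenvalue `λ_i(X, Y)`. -/
noncomputable def genEig {n : Type*} [Fintype n] (X Y : Matrix n n ℝ) (i : ℕ) : ℝ :=
  ⨆ Z : {Z : Submodule ℝ (n → ℝ) // Module.finrank ℝ Z ≤ i - 1},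
    ⨅ w : {w : n → ℝ // (∀ z ∈ Z.1, w ⬝ᵥ z = 0) ∧ Y.mulVec w ≠ 0},
      (w.1 ⬝ᵥ X.mulVec w.1) / (w.1 ⬝ᵥ Y.mulVec w.1)


section SecD
variable {n : ℕ} {Cw Dw : Fin n → Fin n → ℝ}
variable (hCsymm : ∀ u v, Cw u v = Cw v u) (hCnonneg : ∀ u v, 0 ≤ Cw u v)
    (hCdiag : ∀ u, Cw u u = 0)
    (hDsymm : ∀ u v, Dw u v = Dw v u) (hDnonneg : ∀ u v, 0 ≤ Dw u v)
    (hDdiag : ∀ u, Dw u u = 0)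

include hDsymm hDnonneg hDdiag in
lemma qD_pos {w : Fin n → ℝ} (hw : lapM Dw *ᵥ w ≠ 0) : 0 < w ⬝ᵥ lapM Dw *ᵥ w := by
  rcases lt_or_eq_of_le (qf_nonneg hDsymm hDdiag hDnonneg w) with h | h
  · exact h
  · exact absurd (mulVec_eq_zero_of_qf_eq_zero hDsymm hDdiag hDnonneg h.symm) hw

variable (P : PencilData Cw Dw)

include hCsymm hCdiag hCnonneg in
lemma lam_nonneg : ∀ k, 0 ≤ P.lam k := by
  intro k
  have h := P.hC k k
  rw [if_pos rfl] at h
  rw [← h]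
  exact qf_nonneg hCsymm hCdiag hCnonneg _

include hCsymm hCnonneg hCdiag hDsymm hDnonneg hDdiag in
lemma pencil_A {r : ℕ} (hrs : r < P.s) (y : Fin n → ℝ) :
    P.lam ⟨r, hrs⟩ * ((y ⬝ᵥ lapM Dw *ᵥ y)
        - ∑ k ∈ Finset.univ.filter (fun k : Fin P.s => (k : ℕ) < r), (y ⬝ᵥ lapM Dw *ᵥ P.v k) ^ 2)
      ≤ y ⬝ᵥ lapM Cw *ᵥ y := by
  classical
  obtain ⟨nv, hnv0, hnvC, hdecomp⟩ := P.hcomp y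
  set c : Fin P.s → ℝ := fun k => y ⬝ᵥ lapM Dw *ᵥ P.v k with hc
  set u : Fin n → ℝ := ∑ k, c k • P.v k with hu
  have hyD : y ⬝ᵥ lapM Dw *ᵥ y = ∑ k, c k ^ 2 := by
    conv_lhs => rw [hdecomp]
    rw [add_dotProduct, Matrix.mulVec_add, dotProduct_add,
      dotProduct_add, hnv0, dotProduct_zero, dotProduct_zero]
    have h1 : (u : Fin n → ℝ) ⬝ᵥ lapM Dw *ᵥ u = ∑ k, 1 * (c k * c k) :=
      bilin_sum (lapM Dw) P.v (fun _ => 1) P.hD c c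
    have h2 : nv ⬝ᵥ lapM Dw *ᵥ u = 0 := by
      rw [qf_comm hDsymm hDdiag, hnv0, dotProduct_zero]
    rw [h1, h2]
    simp [pow_two]
  have hyC : y ⬝ᵥ lapM Cw *ᵥ y
      = (∑ k, P.lam k * c k ^ 2) + nv ⬝ᵥ lapM Cw *ᵥ nv := by
    conv_lhs => rw [hdecomp]
    rw [add_dotProduct, Matrix.mulVec_add, dotProduct_add,
      dotProduct_add]
    have h1 : (u : Fin n → ℝ) ⬝ᵥ lapM Cw *ᵥ u = ∑ k, P.lam k * (c k * c k) :=
      bilin_sum (lapM Cw) P.v P.lam P.hC c c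
    have h2 : (u : Fin n → ℝ) ⬝ᵥ lapM Cw *ᵥ nv = 0 := by
      rw [hu, qf_sum_left]
      apply Finset.sum_eq_zero
      intro k _
      rw [hnvC k, mul_zero]
    have h3 : nv ⬝ᵥ lapM Cw *ᵥ u = 0 := by
      rw [qf_comm hCsymm hCdiag, h2]
    rw [h1, h2, h3]
    simp [pow_two]
  have hsplit : (∑ k, c k ^ 2)
      - ∑ k ∈ Finset.univ.filter (fun k : Fin P.s => (k : ℕ) < r), c k ^ 2
      = ∑ k ∈ Finset.univ.filter (fun k : Fin P.s => ¬ (k : ℕ) < r), c k ^ 2 := by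
    rw [← Finset.sum_filter_add_sum_filter_not Finset.univ (fun k : Fin P.s => (k : ℕ) < r)
      (fun k => c k ^ 2)]
    ring
  rw [hyD, hyC, hsplit]
  have hstep1 : P.lam ⟨r, hrs⟩ * ∑ k ∈ Finset.univ.filter (fun k : Fin P.s => ¬ (k : ℕ) < r), c k ^ 2
      ≤ ∑ k ∈ Finset.univ.filter (fun k : Fin P.s => ¬ (k : ℕ) < r), P.lam k * c k ^ 2 := by
    rw [Finset.mul_sum]
    apply Finset.sum_le_sum
    intro k hk
    have hk' : ¬ (k : ℕ) < r := (Finset.mem_filter.1 hk).2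
    have : (⟨r, hrs⟩ : Fin P.s) ≤ k := by
      rw [Fin.le_def]
      exact not_lt.1 hk'
    exact mul_le_mul_of_nonneg_right (P.hmono this) (sq_nonneg _)
  have hstep2 : ∑ k ∈ Finset.univ.filter (fun k : Fin P.s => ¬ (k : ℕ) < r), P.lam k * c k ^ 2
      ≤ ∑ k, P.lam k * c k ^ 2 := by
    apply Finset.sum_le_sum_of_subset_of_nonneg (Finset.filter_subset _ _)
    intro k _ _
    exact mul_nonneg (lam_nonneg hCsymm hCnonneg hCdiag P k) (sq_nonneg _)
  have hnvnn : 0 ≤ nv ⬝ᵥ lapM Cw *ᵥ nv := qf_nonneg hCsymm hCdiag hCnonneg nv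
  linarith

include hCsymm hCnonneg hCdiag hDsymm hDnonneg hDdiag in
lemma pencil_B {r : ℕ} (hrs : r < P.s) (Z : Submodule ℝ (Fin n → ℝ))
    (hZ : Module.finrank ℝ Z ≤ r) :
    ∃ w : Fin n → ℝ, (∀ z ∈ Z, w ⬝ᵥ z = 0) ∧ lapM Dw *ᵥ w ≠ 0 ∧
      w ⬝ᵥ lapM Cw *ᵥ w ≤ P.lam ⟨r, hrs⟩ * (w ⬝ᵥ lapM Dw *ᵥ w) := by
  classical
  set emb : Fin (r + 1) → Fin P.s := Fin.castLE hrs with hemb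
  have hembinj : Function.Injective emb := Fin.castLE_injective _
  set T : (Fin (r + 1) → ℝ) →ₗ[ℝ] (Fin n → ℝ) :=
    Fintype.linearCombination ℝ (fun j => P.v (emb j)) with hT
  have hTapp : ∀ cc : Fin (r + 1) → ℝ, T cc = ∑ j, cc j • P.v (emb j) := by
    intro cc
    rw [hT, Fintype.linearCombination_apply]
  set eqv := (WithLp.linearEquiv 2 ℝ (Fin n → ℝ)).symm with heqv
  set Z' : Submodule ℝ (EuclideanSpace ℝ (Fin n)) := Z.map eqv.toLinearMap with hZ'
  have hZ'rank : Module.finrank ℝ Z' ≤ r := by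
    rw [hZ', LinearEquiv.finrank_map_eq]
    exact hZ
  set ψ : (Fin (r + 1) → ℝ) →ₗ[ℝ] Z' :=
    Z'.orthogonalProjectionOnto.toLinearMap ∘ₗ eqv.toLinearMap ∘ₗ T with hψ
  have hnotinj : ¬ Function.Injective ψ := by
    intro hinj
    have := LinearMap.finrank_le_finrank_of_injective hinj
    rw [Module.finrank_fin_fun] at this
    omega
  obtain ⟨c₁, c₂, hceq, hcne⟩ := Function.not_injective_iff.1 hnotinj
  set cc := c₁ - c₂ with hcc
  have hccne : cc ≠ 0 := sub_ne_zero.2 hcne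
  have hψcc : ψ cc = 0 := by
    rw [hcc, map_sub, hceq, sub_self]
  set w := T cc with hw
  have horth : ∀ z ∈ Z, w ⬝ᵥ z = 0 := by
    intro z hz
    have hproj : Z'.orthogonalProjectionOnto (eqv w) = 0 := hψcc
    have hwperp : (eqv w : EuclideanSpace ℝ (Fin n)) ∈ Z'ᗮ := by
      have := Submodule.sub_starProjection_mem_orthogonal (K := Z') (eqv w)
      rwa [Submodule.starProjection_apply, hproj, ZeroMemClass.coe_zero, sub_zero] at this
    have hz' : (eqv z : EuclideanSpace ℝ (Fin n)) ∈ Z' := Submodule.mem_map_of_mem hz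
    have h0 : ⟪(eqv z : EuclideanSpace ℝ (Fin n)), eqv w⟫ = 0 :=
      (Submodule.mem_orthogonal Z' _).1 hwperp _ hz'
    rw [ip_eq_dot] at h0
    rw [dotProduct_comm]
    exact h0
  have hDform : w ⬝ᵥ lapM Dw *ᵥ w = ∑ j, 1 * (cc j * cc j) := by
    rw [hw, hTapp]
    exact bilin_sum (lapM Dw) (fun j => P.v (emb j)) (fun _ => 1)
      (fun j j' => by
        rw [P.hD (emb j) (emb j')]
        by_cases h : j = j'
        · subst h; simp
        · rw [if_neg (fun hh => h (hembinj hh)), if_neg h]) cc cc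
  have hCform : w ⬝ᵥ lapM Cw *ᵥ w = ∑ j, P.lam (emb j) * (cc j * cc j) := by
    rw [hw, hTapp]
    exact bilin_sum (lapM Cw) (fun j => P.v (emb j)) (fun j => P.lam (emb j))
      (fun j j' => by
        rw [P.hC (emb j) (emb j')]
        by_cases h : j = j'
        · subst h; simp
        · rw [if_neg (fun hh => h (hembinj hh)), if_neg h]) cc cc
  have hDpos : 0 < w ⬝ᵥ lapM Dw *ᵥ w := by
    rw [hDform]
    obtain ⟨j0, hj0⟩ := Function.ne_iff.1 hccne
    apply Finset.sum_pos'
    · intro j _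
      rw [one_mul]
      exact mul_self_nonneg _
    · exact ⟨j0, Finset.mem_univ j0, by
        rw [one_mul]
        exact mul_self_pos.2 (by simpa using hj0)⟩
  refine ⟨w, horth, ?_, ?_⟩
  · intro h0
    rw [h0, dotProduct_zero] at hDpos
    exact lt_irrefl _ hDpos
  · rw [hCform, hDform, Finset.mul_sum]
    apply Finset.sum_le_sum
    intro j _
    have hle : emb j ≤ (⟨r, hrs⟩ : Fin P.s) := by
      rw [Fin.le_def]
      exact Nat.lt_succ_iff.1 j.isLt
    rw [one_mul]
    exact mul_le_mul_of_nonneg_right (P.hmono hle) (mul_self_nonneg _)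

include hCsymm hCnonneg hCdiag hDsymm hDnonneg hDdiag in
lemma genEig_le {r : ℕ} (hrs : r < P.s) :
    genEig (lapM Cw) (lapM Dw) (r + 1) ≤ P.lam ⟨r, hrs⟩ := by
  rw [genEig]
  have hne : Nonempty {Z : Submodule ℝ (Fin n → ℝ) // Module.finrank ℝ Z ≤ (r + 1) - 1} :=
    ⟨⟨⊥, by simp⟩⟩
  apply ciSup_le
  intro Z
  have hZr : Module.finrank ℝ Z.1 ≤ r := by
    have := Z.2
    simpa using this
  obtain ⟨w, hworth, hwD, hwC⟩ :=
    pencil_B hCsymm hCnonneg hCdiag hDsymm hDnonneg hDdiag P hrs Z.1 hZr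
  have hbdd : BddBelow (Set.range fun w : {w : Fin n → ℝ //
      (∀ z ∈ Z.1, w ⬝ᵥ z = 0) ∧ (lapM Dw).mulVec w ≠ 0} =>
      (w.1 ⬝ᵥ (lapM Cw).mulVec w.1) / (w.1 ⬝ᵥ (lapM Dw).mulVec w.1)) := by
    refine ⟨0, ?_⟩
    rintro x ⟨w', rfl⟩
    exact div_nonneg (qf_nonneg hCsymm hCdiag hCnonneg _)
      (le_of_lt (qD_pos hDsymm hDnonneg hDdiag w'.2.2))
  refine ciInf_le_of_le hbdd ⟨w, hworth, hwD⟩ ?_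
  rw [div_le_iff₀ (qD_pos hDsymm hDnonneg hDdiag hwD)]
  calc w ⬝ᵥ (lapM Cw).mulVec w ≤ P.lam ⟨r, hrs⟩ * (w ⬝ᵥ lapM Dw *ᵥ w) := hwC
    _ = P.lam ⟨r, hrs⟩ * (w ⬝ᵥ (lapM Dw).mulVec w) := rfl

end SecD

/-- The column of the demand-weighted difference matrix `X̂` indexed by the pair `{u,v}`
(with `u < v`): the vector `√(D_{u,v})·(x_u − x_v)`. -/
noncomputable def hatCol {n du : ℕ} (D : Fin n → Fin n → ℝ)
    (x : Fin n → EuclideanSpace ℝ (Fin du))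
    (e : {p : Fin n × Fin n // p.1 < p.2}) : EuclideanSpace ℝ (Fin du) :=
  Real.sqrt (D e.1.1 e.1.2) • (x e.1.1 - x e.1.2)


section SecE

lemma card_filter_lt_fin {m r : ℕ} (h : r ≤ m) :
    (Finset.univ.filter (fun i : Fin m => (i : ℕ) < r)).card = r := by
  rw [show Finset.univ.filter (fun i : Fin m => (i : ℕ) < r)
      = Finset.map (Fin.castLEEmb h) Finset.univ from ?_]
  · rw [Finset.card_map, Finset.card_univ, Fintype.card_fin]
  · ext i
    simp only [Finset.mem_filter, Finset.mem_univ, true_and, Finset.mem_map]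
    constructor
    · intro hi
      exact ⟨⟨(i : ℕ), hi⟩, by ext; simp⟩
    · rintro ⟨j, _, rfl⟩
      simpa using j.isLt

lemma card_filter_lt_fin_le {m r : ℕ} :
    ((Finset.univ.filter (fun i : Fin m => (i : ℕ) < r)).card : ℕ) ≤ r := by
  by_cases h : r ≤ m
  · rw [card_filter_lt_fin h]
  · calc (Finset.univ.filter (fun i : Fin m => (i : ℕ) < r)).card
        ≤ (Finset.univ : Finset (Fin m)).card := Finset.card_filter_le _ _
      _ = m := by simp
      _ ≤ r := le_of_not_ge h

/-- the LP / exchange step -/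
lemma lp_step {m r : ℕ} (σ : Fin m → ℝ) (hanti : Antitone σ) (hnn : ∀ i, 0 ≤ σ i)
    (t : Fin m → ℝ) (ht0 : ∀ i, 0 ≤ t i) (ht1 : ∀ i, t i ≤ 1)
    (htsum : ∑ i, t i ≤ r) :
    ∑ i, σ i * t i ≤ ∑ i ∈ Finset.univ.filter (fun i : Fin m => (i : ℕ) < r), σ i := by
  by_cases hrm : r < m
  · set lstar := σ ⟨r, hrm⟩ with hlstar
    have hlnn : 0 ≤ lstar := hnn _
    have key : ∀ i : Fin m, σ i * t i
        ≤ (if (i : ℕ) < r then σ i - lstar else 0) + lstar * t i := by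
      intro i
      by_cases hi : (i : ℕ) < r
      · rw [if_pos hi]
        have hσi : lstar ≤ σ i := hanti (by rw [Fin.le_def]; exact le_of_lt hi)
        nlinarith [ht0 i, ht1 i]
      · rw [if_neg hi]
        have hσi : σ i ≤ lstar := hanti (by rw [Fin.le_def]; exact not_lt.1 hi)
        nlinarith [ht0 i, ht1 i]
    calc ∑ i, σ i * t i
        ≤ ∑ i : Fin m, ((if (i : ℕ) < r then σ i - lstar else 0) + lstar * t i) :=
          Finset.sum_le_sum (fun i _ => key i)
      _ = (∑ i ∈ Finset.univ.filter (fun i : Fin m => (i : ℕ) < r), (σ i - lstar))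
          + lstar * ∑ i, t i := by
          rw [Finset.sum_add_distrib, ← Finset.sum_filter, Finset.mul_sum]
      _ = (∑ i ∈ Finset.univ.filter (fun i : Fin m => (i : ℕ) < r), σ i)
          - r * lstar + lstar * ∑ i, t i := by
          rw [Finset.sum_sub_distrib, Finset.sum_const, card_filter_lt_fin (le_of_lt hrm)]
          ring_nf
      _ ≤ (∑ i ∈ Finset.univ.filter (fun i : Fin m => (i : ℕ) < r), σ i)
          - r * lstar + lstar * r := by
          have := mul_le_mul_of_nonneg_left htsum hlnn
          linarith
      _ = ∑ i ∈ Finset.univ.filter (fun i : Fin m => (i : ℕ) < r), σ i := by ring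
  · have hfilter : Finset.univ.filter (fun i : Fin m => (i : ℕ) < r) = Finset.univ := by
      apply Finset.filter_true_of_mem
      intro i _
      exact lt_of_lt_of_le i.isLt (le_of_not_gt hrm)
    rw [hfilter]
    apply Finset.sum_le_sum
    intro i _
    exact mul_le_of_le_one_right (hnn i) (ht1 i)

variable {n du : ℕ} {Dw : Fin n → Fin n → ℝ}

/-- rows of X̂ -/
noncomputable def XhRow (Dw : Fin n → Fin n → ℝ) (x : Fin n → EuclideanSpace ℝ (Fin du))
    (i : Fin du) : EP n → ℝ :=
  fun e => Real.sqrt (Dw e.1.1 e.1.2) * (x e.1.1 i - x e.1.2 i)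

/-- weighted difference vector of a plain vector -/
noncomputable def wwOf (Dw : Fin n → Fin n → ℝ) (v : Fin n → ℝ) : EP n → ℝ :=
  fun e => Real.sqrt (Dw e.1.1 e.1.2) * (v e.1.1 - v e.1.2)

lemma hatCol_coord (x : Fin n → EuclideanSpace ℝ (Fin du)) (e : EP n) (i : Fin du) :
    hatCol Dw x e i = XhRow Dw x i e := by
  simp [hatCol, XhRow]

lemma gram_entry (x : Fin n → EuclideanSpace ℝ (Fin du)) (e f : EP n) :
    (Matrix.of fun e f : EP n => ⟪hatCol Dw x e, hatCol Dw x f⟫) e f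
      = ∑ i, XhRow Dw x i e * XhRow Dw x i f := by
  rw [Matrix.of_apply, ip_eq_dot]
  apply Finset.sum_congr rfl
  intro i _
  rw [hatCol_coord, hatCol_coord]

lemma gram_qf (x : Fin n → EuclideanSpace ℝ (Fin du)) (w : EP n → ℝ) :
    w ⬝ᵥ (Matrix.of fun e f : EP n => ⟪hatCol Dw x e, hatCol Dw x f⟫) *ᵥ w
      = ∑ i, (XhRow Dw x i ⬝ᵥ w) ^ 2 := by
  simp only [dotProduct, Matrix.mulVec, dotProduct]
  calc ∑ e, w e * ∑ f, (Matrix.of fun e f : EP n => ⟪hatCol Dw x e, hatCol Dw x f⟫) e f * w f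
      = ∑ e, ∑ f, ∑ i, (XhRow Dw x i e * w e) * (XhRow Dw x i f * w f) := by
        apply Finset.sum_congr rfl
        intro e _
        rw [Finset.mul_sum]
        apply Finset.sum_congr rfl
        intro f _
        rw [gram_entry, Finset.sum_mul, Finset.mul_sum]
        apply Finset.sum_congr rfl
        intro i _
        ring
    _ = ∑ e, ∑ i, ∑ f, (XhRow Dw x i e * w e) * (XhRow Dw x i f * w f) :=
        Finset.sum_congr rfl (fun e _ => Finset.sum_comm)
    _ = ∑ i, ∑ e, ∑ f, (XhRow Dw x i e * w e) * (XhRow Dw x i f * w f) :=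
        Finset.sum_comm
    _ = ∑ i, (XhRow Dw x i ⬝ᵥ w) ^ 2 := by
        apply Finset.sum_congr rfl
        intro i _
        rw [pow_two, dotProduct, Finset.sum_mul_sum]

variable (hDsymm : ∀ u v, Dw u v = Dw v u) (hDnonneg : ∀ u v, 0 ≤ Dw u v)
    (hDdiag : ∀ u, Dw u u = 0)

include hDsymm hDnonneg hDdiag in
lemma wwOf_dot (v v' : Fin n → ℝ) :
    wwOf Dw v ⬝ᵥ wwOf Dw v' = v ⬝ᵥ lapM Dw *ᵥ v' := by
  rw [qf_eq_sum hDsymm hDdiag]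
  apply Finset.sum_congr rfl
  intro e _
  simp only [wwOf]
  rw [show Real.sqrt (Dw e.1.1 e.1.2) * (v e.1.1 - v e.1.2)
      * (Real.sqrt (Dw e.1.1 e.1.2) * (v' e.1.1 - v' e.1.2))
      = (Real.sqrt (Dw e.1.1 e.1.2) * Real.sqrt (Dw e.1.1 e.1.2))
        * ((v e.1.1 - v e.1.2) * (v' e.1.1 - v' e.1.2)) from by ring,
    Real.mul_self_sqrt (hDnonneg _ _)]

include hDsymm hDnonneg hDdiag in
lemma XhRow_dot_wwOf (x : Fin n → EuclideanSpace ℝ (Fin du)) (i : Fin du) (v : Fin n → ℝ) :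
    XhRow Dw x i ⬝ᵥ wwOf Dw v = (fun a => x a i) ⬝ᵥ lapM Dw *ᵥ v := by
  have : XhRow Dw x i = wwOf Dw (fun a => x a i) := rfl
  rw [this, wwOf_dot hDsymm hDnonneg hDdiag]

end SecE

section SecF
variable {n du : ℕ} {Dw : Fin n → Fin n → ℝ} {x : Fin n → EuclideanSpace ℝ (Fin du)}

lemma norm_sq_coords (a b : EuclideanSpace ℝ (Fin du)) :
    ‖a - b‖ ^ 2 = ∑ i, (a i - b i) ^ 2 := by
  rw [← real_inner_self_eq_norm_sq, ip_eq_dot]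
  apply Finset.sum_congr rfl
  intro i _
  rw [pow_two]
  congr 1 <;> simp

lemma phi_eq {Cw : Fin n → Fin n → ℝ} (hCsymm : ∀ u v, Cw u v = Cw v u)
    (hCdiag : ∀ u, Cw u u = 0) (x : Fin n → EuclideanSpace ℝ (Fin du)) :
    ∑ p ∈ Finset.univ.filter (fun p : Fin n × Fin n => p.1 < p.2),
        Cw p.1 p.2 * ‖x p.1 - x p.2‖ ^ 2
      = ∑ i, (fun a => x a i) ⬝ᵥ lapM Cw *ᵥ (fun a => x a i) := by
  rw [sum_lt_eq_sum_subtype (fun p => Cw p.1 p.2 * ‖x p.1 - x p.2‖ ^ 2)]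
  calc ∑ e : EP n, Cw e.1.1 e.1.2 * ‖x e.1.1 - x e.1.2‖ ^ 2
      = ∑ e : EP n, ∑ i, Cw e.1.1 e.1.2 * ((x e.1.1 i - x e.1.2 i) * (x e.1.1 i - x e.1.2 i)) := by
        apply Finset.sum_congr rfl
        intro e _
        rw [norm_sq_coords, Finset.mul_sum]
        apply Finset.sum_congr rfl
        intro i _
        rw [pow_two]
    _ = ∑ i, ∑ e : EP n, Cw e.1.1 e.1.2 * ((x e.1.1 i - x e.1.2 i) * (x e.1.1 i - x e.1.2 i)) :=
        Finset.sum_comm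
    _ = ∑ i, (fun a => x a i) ⬝ᵥ lapM Cw *ᵥ (fun a => x a i) := by
        apply Finset.sum_congr rfl
        intro i _
        rw [qf_eq_sum hCsymm hCdiag]

variable (hG : (Matrix.of fun e f : EP n => ⟪hatCol Dw x e, hatCol Dw x f⟫).IsHermitian)

lemma dot_basis_eq (wE : EuclideanSpace ℝ (EP n)) (j : EP n) :
    (wE : EP n → ℝ) ⬝ᵥ ⇑(hG.eigenvectorBasis j) = ⟪hG.eigenvectorBasis j, wE⟫ :=
  (dotProduct_comm _ _).trans (ip_eq_dot (hG.eigenvectorBasis j) wE).symm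

lemma spectral_expand (wE : EuclideanSpace ℝ (EP n)) :
    (wE : EP n → ℝ) ⬝ᵥ (Matrix.of fun e f : EP n => ⟪hatCol Dw x e, hatCol Dw x f⟫) *ᵥ wE
      = ∑ j : EP n, hG.eigenvalues j * (⟪hG.eigenvectorBasis j, wE⟫) ^ 2 := by
  classical
  set G := (Matrix.of fun e f : EP n => ⟪hatCol Dw x e, hatCol Dw x f⟫) with hGdef
  set uB := hG.eigenvectorBasis with huB
  set eig := hG.eigenvalues with heig
  have hrepr : (∑ j, ⟪uB j, wE⟫ • ⇑(uB j)) = (wE : EP n → ℝ) :=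
    by
      have h1 := congrArg WithLp.ofLp (uB.sum_repr' wE)
      simpa only [WithLp.ofLp_sum, WithLp.ofLp_smul] using h1
  have hGw : G *ᵥ (wE : EP n → ℝ) = ∑ j, (eig j * ⟪uB j, wE⟫) • ⇑(uB j) := by
    conv_lhs => rw [← hrepr]
    have hmap := map_sum G.mulVecLin (fun j => ⟪uB j, wE⟫ • ⇑(uB j)) Finset.univ
    simp only [Matrix.mulVecLin_apply] at hmap
    rw [hmap]
    apply Finset.sum_congr rfl
    intro j _
    rw [Matrix.mulVec_smul, hG.mulVec_eigenvectorBasis, smul_smul, mul_comm]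
  rw [hGw, dot_sum_right]
  apply Finset.sum_congr rfl
  intro j _
  rw [dotProduct_smul, smul_eq_mul, dot_basis_eq hG wE j]
  ring

lemma parseval_dot (zE : EuclideanSpace ℝ (EP n)) :
    ∑ j : EP n, ((zE : EP n → ℝ) ⬝ᵥ ⇑(hG.eigenvectorBasis j)) ^ 2
      = (zE : EP n → ℝ) ⬝ᵥ zE := by
  have h := hG.eigenvectorBasis.sum_inner_mul_inner zE zE
  calc ∑ j : EP n, ((zE : EP n → ℝ) ⬝ᵥ ⇑(hG.eigenvectorBasis j)) ^ 2
      = ∑ j : EP n, ⟪zE, hG.eigenvectorBasis j⟫ * ⟪hG.eigenvectorBasis j, zE⟫ := by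
        apply Finset.sum_congr rfl
        intro j _
        rw [pow_two, dot_basis_eq hG zE j]
        congr 1
        exact real_inner_comm _ _
    _ = ⟪zE, zE⟫ := h
    _ = (zE : EP n → ℝ) ⬝ᵥ zE := ip_eq_dot _ _

include hG in
lemma gram_posSemidef :
    (Matrix.of fun e f : EP n => ⟪hatCol Dw x e, hatCol Dw x f⟫).PosSemidef := by
  refine Matrix.PosSemidef.of_dotProduct_mulVec_nonneg hG ?_
  intro w
  have hst : star w = w := by funext e; simp
  rw [hst, gram_qf]
  apply Finset.sum_nonneg
  intro i _
  exact sq_nonneg _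

lemma sum_eig_eq (hDsymm : ∀ u v, Dw u v = Dw v u) (hDnonneg : ∀ u v, 0 ≤ Dw u v)
    (hDdiag : ∀ u, Dw u u = 0) :
    ∑ j : EP n, hG.eigenvalues j
      = ∑ i, (fun a => x a i) ⬝ᵥ lapM Dw *ᵥ (fun a => x a i) := by
  classical
  have heigval : ∀ j, hG.eigenvalues j
      = ⇑(hG.eigenvectorBasis j) ⬝ᵥ
          (Matrix.of fun e f : EP n => ⟪hatCol Dw x e, hatCol Dw x f⟫) *ᵥ ⇑(hG.eigenvectorBasis j) := by
    intro j
    rw [hG.mulVec_eigenvectorBasis, dotProduct_smul]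
    have h2 := orthonormal_iff_ite.1 hG.eigenvectorBasis.orthonormal j j
    rw [if_pos rfl] at h2
    have h1 : ⇑(hG.eigenvectorBasis j) ⬝ᵥ ⇑(hG.eigenvectorBasis j) = 1 :=
      (ip_eq_dot (hG.eigenvectorBasis j) (hG.eigenvectorBasis j)).symm.trans h2
    rw [smul_eq_mul, h1, mul_one]
  calc ∑ j : EP n, hG.eigenvalues j
      = ∑ j : EP n, ∑ i, (XhRow Dw x i ⬝ᵥ ⇑(hG.eigenvectorBasis j)) ^ 2 := by
        apply Finset.sum_congr rfl
        intro j _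
        rw [heigval j, gram_qf]
    _ = ∑ i, ∑ j : EP n, (XhRow Dw x i ⬝ᵥ ⇑(hG.eigenvectorBasis j)) ^ 2 := Finset.sum_comm
    _ = ∑ i, XhRow Dw x i ⬝ᵥ XhRow Dw x i := by
        apply Finset.sum_congr rfl
        intro i _
        exact parseval_dot hG (WithLp.toLp 2 (XhRow Dw x i))
    _ = ∑ i, (fun a => x a i) ⬝ᵥ lapM Dw *ᵥ (fun a => x a i) := by
        apply Finset.sum_congr rfl
        intro i _
        exact XhRow_dot_wwOf hDsymm hDnonneg hDdiag x i (fun a => x a i)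

end SecF

section SecG
variable {n du : ℕ} {Dw : Fin n → Fin n → ℝ} {x : Fin n → EuclideanSpace ℝ (Fin du)}
variable (hG : (Matrix.of fun e f : EP n => ⟪hatCol Dw x e, hatCol Dw x f⟫).IsHermitian)

lemma kyfan {t : ℕ} (ww : Fin t → EuclideanSpace ℝ (EP n)) (hww : Orthonormal ℝ ww)
    (σ : Fin (Fintype.card (EP n)) → ℝ) (hanti : Antitone σ)
    (eqv : Fin (Fintype.card (EP n)) ≃ EP n) (hσe : ∀ i, σ i = hG.eigenvalues (eqv i))
    (hσnn : ∀ i, 0 ≤ σ i) (r : ℕ) :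
    ∑ k ∈ Finset.univ.filter (fun k : Fin t => (k : ℕ) < r),
        ((ww k : EP n → ℝ) ⬝ᵥ (Matrix.of fun e f : EP n => ⟪hatCol Dw x e, hatCol Dw x f⟫) *ᵥ (ww k))
      ≤ ∑ j ∈ Finset.univ.filter (fun j : Fin (Fintype.card (EP n)) => (j : ℕ) < r), σ j := by
  classical
  set uB := hG.eigenvectorBasis with huB
  set τ : EP n → ℝ := fun j =>
    ∑ k ∈ Finset.univ.filter (fun k : Fin t => (k : ℕ) < r), (⟪uB j, ww k⟫ : ℝ) ^ 2 with hτ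
  have step1 : ∑ k ∈ Finset.univ.filter (fun k : Fin t => (k : ℕ) < r),
      ((ww k : EP n → ℝ) ⬝ᵥ (Matrix.of fun e f : EP n => ⟪hatCol Dw x e, hatCol Dw x f⟫) *ᵥ (ww k))
      = ∑ j : EP n, hG.eigenvalues j * τ j := by
    calc ∑ k ∈ Finset.univ.filter (fun k : Fin t => (k : ℕ) < r),
        ((ww k : EP n → ℝ) ⬝ᵥ (Matrix.of fun e f : EP n => ⟪hatCol Dw x e, hatCol Dw x f⟫) *ᵥ (ww k))
        = ∑ k ∈ Finset.univ.filter (fun k : Fin t => (k : ℕ) < r),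
            ∑ j : EP n, hG.eigenvalues j * (⟪uB j, ww k⟫ : ℝ) ^ 2 :=
          Finset.sum_congr rfl (fun k _ => spectral_expand hG (ww k))
      _ = ∑ j : EP n, ∑ k ∈ Finset.univ.filter (fun k : Fin t => (k : ℕ) < r),
            hG.eigenvalues j * (⟪uB j, ww k⟫ : ℝ) ^ 2 := Finset.sum_comm
      _ = ∑ j : EP n, hG.eigenvalues j * τ j := by
          apply Finset.sum_congr rfl
          intro j _
          rw [hτ, Finset.mul_sum]
  rw [step1]
  have step2 : ∑ j : EP n, hG.eigenvalues j * τ j = ∑ i, σ i * τ (eqv i) := by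
    rw [← Equiv.sum_comp eqv (fun j => hG.eigenvalues j * τ j)]
    apply Finset.sum_congr rfl
    intro i _
    rw [hσe i]
  rw [step2]
  apply lp_step σ hanti hσnn (fun i => τ (eqv i))
  · intro i
    apply Finset.sum_nonneg
    intro k _
    exact sq_nonneg _
  · intro i
    have hb := hww.sum_inner_products_le
      (𝕜 := ℝ) (uB (eqv i)) (s := Finset.univ.filter (fun k : Fin t => (k : ℕ) < r))
    have hnorm : ‖uB (eqv i)‖ = 1 := uB.orthonormal.1 (eqv i)
    rw [hnorm] at hb
    calc τ (eqv i) = ∑ k ∈ Finset.univ.filter (fun k : Fin t => (k : ℕ) < r),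
          ‖(⟪ww k, uB (eqv i)⟫ : ℝ)‖ ^ 2 := by
          apply Finset.sum_congr rfl
          intro k _
          rw [real_inner_comm, Real.norm_eq_abs, sq_abs]
      _ ≤ 1 ^ 2 := hb
      _ = 1 := one_pow 2
  · have hsum : ∑ i, τ (eqv i) = ∑ j : EP n, τ j := Equiv.sum_comp eqv τ
    rw [hsum]
    have hswap : ∑ j : EP n, τ j
        = ∑ k ∈ Finset.univ.filter (fun k : Fin t => (k : ℕ) < r),
            ∑ j : EP n, (⟪uB j, ww k⟫ : ℝ) ^ 2 := Finset.sum_comm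
    have hone : ∀ k : Fin t, ∑ j : EP n, (⟪uB j, ww k⟫ : ℝ) ^ 2 = 1 := by
      intro k
      have hp := parseval_dot hG (ww k)
      have h2 := orthonormal_iff_ite.1 hww k k
      rw [if_pos rfl] at h2
      calc ∑ j : EP n, (⟪uB j, ww k⟫ : ℝ) ^ 2
          = ∑ j : EP n, ((ww k : EP n → ℝ) ⬝ᵥ ⇑(uB j)) ^ 2 := by
            apply Finset.sum_congr rfl
            intro j _
            rw [dot_basis_eq hG]
        _ = (ww k : EP n → ℝ) ⬝ᵥ (ww k : EP n → ℝ) := hp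
        _ = 1 := (ip_eq_dot (ww k) (ww k)).symm.trans h2
    rw [hswap, Finset.sum_congr rfl (fun k _ => hone k), Finset.sum_const, nsmul_eq_mul, mul_one]
    exact_mod_cast card_filter_lt_fin_le

end SecG


/-- Spectral bound on the trailing eigenvalues of `X̂ᵀX̂`, the Gram
matrix of the demand-weighted differences: if `σ_1 ≥ … ≥ σ_m` are its eigenvalues in
descending order, then for every `r` with `r + 1 ≤ rank(L_D)`,
`λ_{r+1}(L_C, L_D) · Σ_{j≥r+1} σ_j ≤ Σ_{u<v} C_{u,v}‖x_u − x_v‖²`; equivalently, when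
`Σ_{u<v} D_{u,v}‖x_u − x_v‖² = ‖X̂‖_F² > 0` and `λ_{r+1}(L_C, L_D) > 0`,
`(Σ_{j≥r+1} σ_j)/‖X̂‖_F² ≤ Φ^SDP / λ_{r+1}(L_C, L_D)`. -/
theorem stmt15 {n du : ℕ} (C D : Fin n → Fin n → ℝ)
    (hCsymm : ∀ u v, C u v = C v u) (hCnonneg : ∀ u v, 0 ≤ C u v)
    (hCdiag : ∀ u, C u u = 0)
    (hDsymm : ∀ u v, D u v = D v u) (hDnonneg : ∀ u v, 0 ≤ D u v)
    (hDdiag : ∀ u, D u u = 0)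
    (x : Fin n → EuclideanSpace ℝ (Fin du))
    (hG : (Matrix.of fun e f : {p : Fin n × Fin n // p.1 < p.2} =>
        ⟪hatCol D x e, hatCol D x f⟫).IsHermitian)
    (σ : Fin (Fintype.card {p : Fin n × Fin n // p.1 < p.2}) → ℝ)
    (hanti : Antitone σ)
    (hσ : ∃ e : Fin (Fintype.card {p : Fin n × Fin n // p.1 < p.2}) ≃
        {p : Fin n × Fin n // p.1 < p.2}, ∀ i, σ i = hG.eigenvalues (e i))
    (r : ℕ) (hr : r + 1 ≤ (lapM D).rank) :
    genEig (lapM C) (lapM D) (r + 1) *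
        (∑ j ∈ Finset.univ.filter (fun j : Fin (Fintype.card {p : Fin n × Fin n // p.1 < p.2}) => r ≤ (j : ℕ)), σ j)
      ≤ ∑ p ∈ Finset.univ.filter (fun p : Fin n × Fin n => p.1 < p.2),
          C p.1 p.2 * ‖x p.1 - x p.2‖ ^ 2 ∧
    ((0 < ∑ p ∈ Finset.univ.filter (fun p : Fin n × Fin n => p.1 < p.2),
          D p.1 p.2 * ‖x p.1 - x p.2‖ ^ 2) →
      0 < genEig (lapM C) (lapM D) (r + 1) →
      (∑ j ∈ Finset.univ.filter (fun j : Fin (Fintype.card {p : Fin n × Fin n // p.1 < p.2}) => r ≤ (j : ℕ)), σ j) /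
          (∑ p ∈ Finset.univ.filter (fun p : Fin n × Fin n => p.1 < p.2),
            D p.1 p.2 * ‖x p.1 - x p.2‖ ^ 2)
        ≤ ((∑ p ∈ Finset.univ.filter (fun p : Fin n × Fin n => p.1 < p.2),
              C p.1 p.2 * ‖x p.1 - x p.2‖ ^ 2) /
            (∑ p ∈ Finset.univ.filter (fun p : Fin n × Fin n => p.1 < p.2),
              D p.1 p.2 * ‖x p.1 - x p.2‖ ^ 2)) /
          genEig (lapM C) (lapM D) (r + 1)) := by
  classical
  obtain ⟨eqv, hσe⟩ := hσ
  obtain ⟨P⟩ := pencil_exists hCsymm hCnonneg hCdiag hDsymm hDnonneg hDdiag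
  have hrs : r < P.s := by
    have := P.hs
    omega
  set y : Fin du → Fin n → ℝ := fun i a => x a i with hy
  have hσnn : ∀ i, 0 ≤ σ i := by
    intro i
    rw [hσe i]
    exact (gram_posSemidef hG).eigenvalues_nonneg (eqv i)
  set ww : Fin P.s → EuclideanSpace ℝ (EP n) := fun k => WithLp.toLp 2 (wwOf D (P.v k)) with hww_def
  have hww : Orthonormal ℝ ww := by
    rw [orthonormal_iff_ite]
    intro k l
    calc (⟪ww k, ww l⟫ : ℝ) = (ww k : EP n → ℝ) ⬝ᵥ (ww l : EP n → ℝ) := ip_eq_dot _ _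
      _ = P.v k ⬝ᵥ lapM D *ᵥ P.v l := wwOf_dot hDsymm hDnonneg hDdiag (P.v k) (P.v l)
      _ = if k = l then 1 else 0 := P.hD k l
  have hKF := kyfan hG ww hww σ hanti eqv hσe hσnn r
  have hwwG : ∀ k : Fin P.s,
      ((ww k : EP n → ℝ) ⬝ᵥ (Matrix.of fun e f : EP n => ⟪hatCol D x e, hatCol D x f⟫) *ᵥ (ww k))
        = ∑ i, (y i ⬝ᵥ lapM D *ᵥ P.v k) ^ 2 := by
    intro k
    rw [gram_qf]
    apply Finset.sum_congr rfl
    intro i _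
    congr 1
    exact XhRow_dot_wwOf hDsymm hDnonneg hDdiag x i (P.v k)
  have hKF' : ∑ k ∈ Finset.univ.filter (fun k : Fin P.s => (k : ℕ) < r),
      ∑ i, (y i ⬝ᵥ lapM D *ᵥ P.v k) ^ 2
      ≤ ∑ j ∈ Finset.univ.filter
          (fun j : Fin (Fintype.card (EP n)) => (j : ℕ) < r), σ j := by
    rw [← Finset.sum_congr rfl (fun k _ => hwwG k)]
    exact hKF
  have hall : ∑ i, σ i = ∑ i, y i ⬝ᵥ lapM D *ᵥ y i := by
    rw [show ∑ i, σ i = ∑ j : EP n, hG.eigenvalues j from by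
      rw [← Equiv.sum_comp eqv hG.eigenvalues]
      exact Finset.sum_congr rfl (fun i _ => hσe i)]
    exact sum_eig_eq hG hDsymm hDnonneg hDdiag
  have hfilter_eq : Finset.univ.filter
        (fun j : Fin (Fintype.card (EP n)) => r ≤ (j : ℕ))
      = Finset.univ.filter (fun j : Fin (Fintype.card (EP n)) => ¬ (j : ℕ) < r) := by
    apply Finset.filter_congr
    intro j _
    simp [not_lt]
  have hsplitσ : ∑ i, σ i
      = ∑ j ∈ Finset.univ.filter (fun j : Fin (Fintype.card (EP n)) => (j : ℕ) < r), σ j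
        + ∑ j ∈ Finset.univ.filter (fun j : Fin (Fintype.card (EP n)) => ¬ (j : ℕ) < r), σ j :=
    (Finset.sum_filter_add_sum_filter_not _ _ _).symm
  set tailS := ∑ j ∈ Finset.univ.filter
      (fun j : Fin (Fintype.card (EP n)) => r ≤ (j : ℕ)), σ j with htailS
  have htail_nn : 0 ≤ tailS := Finset.sum_nonneg (fun j _ => hσnn j)
  have htail_le : tailS ≤ ∑ i, (y i ⬝ᵥ lapM D *ᵥ y i
      - ∑ k ∈ Finset.univ.filter (fun k : Fin P.s => (k : ℕ) < r),
          (y i ⬝ᵥ lapM D *ᵥ P.v k) ^ 2) := by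
    have hswap : ∑ k ∈ Finset.univ.filter (fun k : Fin P.s => (k : ℕ) < r),
        ∑ i, (y i ⬝ᵥ lapM D *ᵥ P.v k) ^ 2
        = ∑ i, ∑ k ∈ Finset.univ.filter (fun k : Fin P.s => (k : ℕ) < r),
            (y i ⬝ᵥ lapM D *ᵥ P.v k) ^ 2 := Finset.sum_comm
    rw [Finset.sum_sub_distrib]
    rw [htailS, hfilter_eq]
    have h1 : ∑ j ∈ Finset.univ.filter (fun j : Fin (Fintype.card (EP n)) => ¬ (j : ℕ) < r), σ j
        = (∑ i, σ i) - ∑ j ∈ Finset.univ.filter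
            (fun j : Fin (Fintype.card (EP n)) => (j : ℕ) < r), σ j := by
      rw [hsplitσ]; ring
    rw [h1, hall]
    have := hKF'
    rw [hswap] at this
    linarith
  set lamr := P.lam ⟨r, hrs⟩ with hlamr
  have hlamr_nn : 0 ≤ lamr := lam_nonneg hCsymm hCnonneg hCdiag P _
  have part1 : genEig (lapM C) (lapM D) (r + 1) * tailS
      ≤ ∑ p ∈ Finset.univ.filter (fun p : Fin n × Fin n => p.1 < p.2),
          C p.1 p.2 * ‖x p.1 - x p.2‖ ^ 2 := by
    calc genEig (lapM C) (lapM D) (r + 1) * tailS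
        ≤ lamr * tailS := mul_le_mul_of_nonneg_right
          (genEig_le hCsymm hCnonneg hCdiag hDsymm hDnonneg hDdiag P hrs) htail_nn
      _ ≤ lamr * ∑ i, (y i ⬝ᵥ lapM D *ᵥ y i
          - ∑ k ∈ Finset.univ.filter (fun k : Fin P.s => (k : ℕ) < r),
              (y i ⬝ᵥ lapM D *ᵥ P.v k) ^ 2) := mul_le_mul_of_nonneg_left htail_le hlamr_nn
      _ = ∑ i, lamr * (y i ⬝ᵥ lapM D *ᵥ y i
          - ∑ k ∈ Finset.univ.filter (fun k : Fin P.s => (k : ℕ) < r),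
              (y i ⬝ᵥ lapM D *ᵥ P.v k) ^ 2) := Finset.mul_sum _ _ _
      _ ≤ ∑ i, y i ⬝ᵥ lapM C *ᵥ y i := Finset.sum_le_sum (fun i _ =>
          pencil_A hCsymm hCnonneg hCdiag hDsymm hDnonneg hDdiag P hrs (y i))
      _ = ∑ p ∈ Finset.univ.filter (fun p : Fin n × Fin n => p.1 < p.2),
          C p.1 p.2 * ‖x p.1 - x p.2‖ ^ 2 := (phi_eq hCsymm hCdiag x).symm
  refine ⟨part1, ?_⟩
  intro hΦD hgen
  set Ac := ∑ p ∈ Finset.univ.filter (fun p : Fin n × Fin n => p.1 < p.2),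
      C p.1 p.2 * ‖x p.1 - x p.2‖ ^ 2 with hAc
  set Bd := ∑ p ∈ Finset.univ.filter (fun p : Fin n × Fin n => p.1 < p.2),
      D p.1 p.2 * ‖x p.1 - x p.2‖ ^ 2 with hBd
  set g := genEig (lapM C) (lapM D) (r + 1) with hg
  rw [div_div, div_le_div_iff₀ hΦD (mul_pos hΦD hgen)]
  have h2 : (g * tailS) * Bd ≤ Ac * Bd :=
    mul_le_mul_of_nonneg_right part1 (le_of_lt hΦD)
  calc tailS * (Bd * g) = (g * tailS) * Bd := by ring
    _ ≤ Ac * Bd := h2
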